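/- Let P = (a, b) ∈ ℝ² with |b| ≤ δ, let ρ > 0, and let Q₁, Q₂ be two points on the circle of radius ρ centered at P, both with second coordinate in [−δ, δ] and both with first coordinate greater than a (i.e., on the same side). Then the angle ∠Q₁PQ₂ at P between the rays PQ₁ and PQ₂ is at most arcsin((δ−b)/ρ) + arcsin((δ+b)/ρ), provided ρ ≥ 2δ. -/

import Mathlib

open EuclideanGeometry RealInnerProductSpace

lemma polar2 (ρ : ℝ) (hρ : 0 < ρ) (u : EuclideanSpace ℝ (Fin 2))
    (hn : ‖u‖ = ρ) (hx : 0 < u 0) :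
    u 0 = ρ * Real.cos (Real.arcsin (u 1 / ρ)) ∧
    u 1 = ρ * Real.sin (Real.arcsin (u 1 / ρ)) := by
  have hsq : u 0 ^ 2 + u 1 ^ 2 = ρ ^ 2 := by
    have := EuclideanSpace.norm_eq u
    rw [hn] at this
    have h2 : ρ ^ 2 = (∑ i, ‖u i‖ ^ 2) := by
      rw [this]; rw [Real.sq_sqrt]; positivity
    rw [Fin.sum_univ_two] at h2
    simp [sq_abs] at h2
    linarith
  have h1 : |u 1 / ρ| ≤ 1 := by
    rw [abs_div, abs_of_pos hρ, div_le_one hρ]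
    nlinarith [abs_nonneg (u 1), sq_abs (u 1)]
  have hle := abs_le.mp h1
  constructor
  · rw [Real.cos_arcsin]
    have : Real.sqrt (1 - (u 1 / ρ) ^ 2) = u 0 / ρ := by
      rw [show (1 : ℝ) - (u 1 / ρ) ^ 2 = (u 0 / ρ) ^ 2 by field_simp; nlinarith]
      exact Real.sqrt_sq (by positivity)
    rw [this]; field_simp
  · rw [Real.sin_arcsin hle.1 hle.2]; field_simp

/-- Angle estimate of Proposition 3.3, case (i): if `P = (a,b)` with `|b| ≤ δ`, and
`Q₁, Q₂` lie on the circle of radius `ρ ≥ 2δ` around `P`, in the horizontal strip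
`|y| ≤ δ` and on the same side `x > a`, then the angle `∠Q₁PQ₂` is at most
`arcsin((δ−b)/ρ) + arcsin((δ+b)/ρ)`. -/
theorem stmt_5 (δ ρ : ℝ) (hδ : 0 < δ) (hρ : 2 * δ ≤ ρ)
    (P Q₁ Q₂ : EuclideanSpace ℝ (Fin 2))
    (hb : |P 1| ≤ δ)
    (hQ₁ : dist Q₁ P = ρ) (hQ₂ : dist Q₂ P = ρ)
    (hQ₁y : Q₁ 1 ∈ Set.Icc (-δ) δ) (hQ₂y : Q₂ 1 ∈ Set.Icc (-δ) δ)
    (hQ₁x : P 0 < Q₁ 0) (hQ₂x : P 0 < Q₂ 0) :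
    EuclideanGeometry.angle Q₁ P Q₂ ≤
      Real.arcsin ((δ - P 1) / ρ) + Real.arcsin ((δ + P 1) / ρ) := by
  have hρ0 : 0 < ρ := by linarith
  set u : EuclideanSpace ℝ (Fin 2) := Q₁ - P with hu
  set v : EuclideanSpace ℝ (Fin 2) := Q₂ - P with hv
  have hun : ‖u‖ = ρ := by rw [hu, ← dist_eq_norm] at *; exact hQ₁
  have hvn : ‖v‖ = ρ := by rw [hv]; rw [← dist_eq_norm]; exact hQ₂
  have hu0 : u 0 = Q₁ 0 - P 0 := rfl
  have hu1 : u 1 = Q₁ 1 - P 1 := rfl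
  have hv0 : v 0 = Q₂ 0 - P 0 := rfl
  have hv1 : v 1 = Q₂ 1 - P 1 := rfl
  set θ₁ := Real.arcsin (u 1 / ρ) with hθ₁
  set θ₂ := Real.arcsin (v 1 / ρ) with hθ₂
  obtain ⟨hu0e, hu1e⟩ := polar2 ρ hρ0 u hun (by rw [hu0]; linarith)
  obtain ⟨hv0e, hv1e⟩ := polar2 ρ hρ0 v hvn (by rw [hv0]; linarith)
  rw [← hθ₁] at hu0e hu1e
  rw [← hθ₂] at hv0e hv1e
  have hinner : ⟪u, v⟫ = ρ ^ 2 * Real.cos (θ₁ - θ₂) := by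
    rw [PiLp.inner_apply, Fin.sum_univ_two]
    simp only [RCLike.inner_apply, conj_trivial]
    rw [hu0e, hu1e, hv0e, hv1e, Real.cos_sub]
    ring
  have hang : EuclideanGeometry.angle Q₁ P Q₂ = |θ₁ - θ₂| := by
    rw [EuclideanGeometry.angle, InnerProductGeometry.angle]
    have : (Q₁ -ᵥ P : EuclideanSpace ℝ (Fin 2)) = u := rfl
    rw [this]
    have : (Q₂ -ᵥ P : EuclideanSpace ℝ (Fin 2)) = v := rfl
    rw [this, hinner, hun, hvn]
    rw [show ρ ^ 2 * Real.cos (θ₁ - θ₂) / (ρ * ρ) = Real.cos (θ₁ - θ₂) by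
      field_simp]
    rw [← Real.cos_abs]
    have h1 := Real.arcsin_mem_Icc (u 1 / ρ)
    have h2 := Real.arcsin_mem_Icc (v 1 / ρ)
    rw [Real.arccos_cos (abs_nonneg _)]
    rw [abs_sub_le_iff]
    constructor <;> [skip; skip] <;>
      · simp only [Set.mem_Icc] at h1 h2; linarith [Real.pi_pos]
  rw [hang]
  have hbl := abs_le.mp hb
  have mono : ∀ (w : EuclideanSpace ℝ (Fin 2)), w 1 ∈ Set.Icc (-δ) δ →
      Real.arcsin ((w - P) 1 / ρ) ≤ Real.arcsin ((δ - P 1) / ρ) ∧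
      -Real.arcsin ((δ + P 1) / ρ) ≤ Real.arcsin ((w - P) 1 / ρ) := by
    intro w hw
    obtain ⟨hw1, hw2⟩ := hw
    have hwp : (w - P) 1 = w 1 - P 1 := rfl
    constructor
    · apply Real.monotone_arcsin
      rw [hwp]
      gcongr
    · rw [← Real.arcsin_neg, ← neg_div]
      apply Real.monotone_arcsin
      rw [hwp]
      gcongr
      linarith
  obtain ⟨hA1, hB1⟩ := mono Q₁ hQ₁y
  obtain ⟨hA2, hB2⟩ := mono Q₂ hQ₂y
  rw [abs_sub_le_iff]
  exact ⟨by linarith, by linarith⟩
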